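/- Let ω = e^{2πi/3} and σ = diag(1, ω, ω²). For L ≥ 2, on (ℂ³)^{⊗L} define the chiral clock operator N = (1/√3) Σ_{j=1}^{L−1} (e^{−iπ/6} σ_j† σ_{j+1} + e^{iπ/6} σ_j σ_{j+1}†) (i.e. the operator N_θ at θ = π/6, with 2cos(π/6) = √3). Then exp((2πi/3)·N) = ω^{L−1} · σ_1 σ_L†. In particular ω raised to the chiral kink-number operator is, up to the phase ω^{L−1}, an operator acting only on the two boundary sites, so any operator commuting with N and with σ_L commutes with σ_1. -/

import Mathlib

/-!
STATEMENT 16: For the chiral clock operator N = (1/√3) Σ_{j=1}^{L−1}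
(e^{−iπ/6} σ_j†σ_{j+1} + e^{iπ/6} σ_jσ_{j+1}†) one has exp((2πi/3)N) = ω^{L−1} σ₁σ_L†;
hence any operator commuting with N and with σ_L commutes with σ₁.  Sites are 0-based.
-/

noncomputable section

open Matrix Complex

/-- ω = e^{2πi/3}. -/
def ω : ℂ := Complex.exp (2 * Real.pi * Complex.I / 3)

/-- The 3×3 clock matrix σ = diag(1, ω, ω²). -/
def clockM : Matrix (Fin 3) (Fin 3) ℂ := !![1, 0, 0; 0, ω, 0; 0, 0, ω ^ 2]

/-- The 3×3 shift matrix τ. -/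
def shiftM : Matrix (Fin 3) (Fin 3) ℂ := !![0, 0, 1; 1, 0, 0; 0, 1, 0]

/-- The operator on (ℂ³)^{⊗L} acting as the 3×3 matrix `A` on the j-th tensor factor
and as the identity on all the others (matrix entries of a tensor product). -/
def siteOp3 (L : ℕ) (j : ℕ) (A : Matrix (Fin 3) (Fin 3) ℂ) :
    Matrix (Fin L → Fin 3) (Fin L → Fin 3) ℂ :=
  fun s t => ∏ k : Fin L, if (k : ℕ) = j then A (s k) (t k) else (if s k = t k then 1 else 0)

/-- σ_j on the clock chain (0-based site index). -/
def clockS (L j : ℕ) : Matrix (Fin L → Fin 3) (Fin L → Fin 3) ℂ := siteOp3 L j clockM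

/-- τ_j on the clock chain (0-based site index). -/
def clockT (L j : ℕ) : Matrix (Fin L → Fin 3) (Fin L → Fin 3) ℂ := siteOp3 L j shiftM

/-!
Every σ_j is diagonal in the product basis, hence so is N. On a basis state s the bond
(j, j+1) contributes `(e^{-iπ/6} z⁻¹ + e^{iπ/6} z)/√3` with `z = ω^{s_j - s_{j+1}}` a cube
root of unity; for `z = ω^k` this is `2 cos(π/6 + 2πk/3)/√3 ∈ {1, -1, 0}`, so
`exp(2πi/3 · _) = ω z`. Over the bonds the `z`'s telescope to `ω^{s_0 - s_{L-1}}`, the entry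
of σ_0 σ_{L-1}†. An operator commuting with N commutes with its exponential, and σ_{L-1} is
unitary.
-/

lemma isPrimitiveRoot_ω : IsPrimitiveRoot ω 3 := by
  simpa [ω] using Complex.isPrimitiveRoot_exp 3 (by norm_num)

lemma ω_ne_zero : ω ≠ 0 := Complex.exp_ne_zero _

lemma star_ω_pow (k : ℕ) : star (ω ^ k) = (ω ^ k)⁻¹ :=
  (Complex.inv_eq_conj <| by
    rw [norm_pow, isPrimitiveRoot_ω.norm'_eq_one (by norm_num), one_pow]).symm

def chiralBond (z : ℂ) : ℂ :=
  exp (-(Real.pi * I) / 6) * z⁻¹ + exp ((Real.pi * I) / 6) * z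

lemma chiralBond_ω_pow (k : ℕ) :
    chiralBond (ω ^ k) = 2 * Real.cos (Real.pi / 6 + 2 * Real.pi * k / 3) := by
  rw [chiralBond, ω, ← Complex.exp_nat_mul, ← Complex.exp_neg, ← Complex.exp_add,
    ← Complex.exp_add, Complex.ofReal_cos, Complex.two_cos]
  push_cast
  ring_nf

lemma exp_chiralBond {z : ℂ} (hz : z ^ 3 = 1) :
    exp (2 * Real.pi * I / 3 * ((Real.sqrt 3 : ℂ)⁻¹ * chiralBond z)) = ω * z := by
  obtain ⟨k, hk, rfl⟩ := isPrimitiveRoot_ω.eq_pow_of_pow_eq_one hz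
  have h3 : ((Real.sqrt 3 : ℝ) : ℂ) ≠ 0 := by norm_cast; positivity
  have hω : ω ^ 3 = 1 := isPrimitiveRoot_ω.pow_eq_one
  rw [chiralBond_ω_pow]
  interval_cases k
  · rw [show Real.pi / 6 + 2 * Real.pi * ((0 : ℕ) : ℝ) / 3 = Real.pi / 6 by push_cast; ring,
      Real.cos_pi_div_six]
    push_cast
    rw [show (Real.sqrt 3 : ℂ)⁻¹ * (2 * ((Real.sqrt 3 : ℂ) / 2)) = 1 by field_simp, mul_one,
      pow_zero, mul_one]
    rfl
  · rw [show Real.pi / 6 + 2 * Real.pi * ((1 : ℕ) : ℝ) / 3 = Real.pi - Real.pi / 6 by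
      push_cast; ring, Real.cos_pi_sub, Real.cos_pi_div_six]
    push_cast
    rw [show (Real.sqrt 3 : ℂ)⁻¹ * (2 * -((Real.sqrt 3 : ℂ) / 2)) = -1 by field_simp,
      mul_neg_one, Complex.exp_neg, ← ω, eq_comm, inv_eq_of_mul_eq_one_right]
    linear_combination hω
  · rw [show Real.pi / 6 + 2 * Real.pi * ((2 : ℕ) : ℝ) / 3 = Real.pi / 2 + Real.pi by
      push_cast; ring, Real.cos_add_pi, Real.cos_pi_div_two]
    push_cast
    rw [neg_zero, mul_zero, mul_zero, mul_zero, Complex.exp_zero]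
    linear_combination -hω

lemma Finset.prod_range_div_of_ne_zero {G₀ : Type*} [CommGroupWithZero G₀] {f : ℕ → G₀}
    (hf : ∀ i, f i ≠ 0) (n : ℕ) : ∏ i ∈ range n, f i / f (i + 1) = f 0 / f n := by
  induction n with
  | zero => simp [hf]
  | succ n ih => rw [prod_range_succ, ih, div_mul_div_cancel₀ (hf n)]

lemma exp_sum_chiralBond (a : ℕ → ℕ) (n : ℕ) :
    exp (2 * Real.pi * I / 3 * ((Real.sqrt 3 : ℂ)⁻¹ *
        ∑ j ∈ Finset.range n, chiralBond (ω ^ a j / ω ^ a (j + 1))))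
      = ω ^ n * (ω ^ a 0 / ω ^ a n) := by
  have hcube : ∀ j, (ω ^ a j / ω ^ a (j + 1)) ^ 3 = 1 := fun j => by
    rw [div_pow, ← pow_mul, ← pow_mul, pow_mul', pow_mul', isPrimitiveRoot_ω.pow_eq_one,
      one_pow, one_pow, div_one]
  rw [Finset.mul_sum, Finset.mul_sum, Complex.exp_sum,
    Finset.prod_congr rfl fun j _ => exp_chiralBond (hcube j), Finset.prod_mul_distrib,
    Finset.prod_const, Finset.card_range,
    Finset.prod_range_div_of_ne_zero fun j => pow_ne_zero _ ω_ne_zero]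

lemma siteOp3_diagonal {L : ℕ} (k : Fin L) (v : Fin 3 → ℂ) :
    siteOp3 L k (diagonal v) = diagonal fun s => v (s k) := by
  ext s t
  by_cases hst : s = t
  · subst hst
    simp [siteOp3, Fin.val_inj]
  · obtain ⟨i, hi⟩ := Function.ne_iff.mp hst
    rw [diagonal_apply_ne _ hst]
    refine Finset.prod_eq_zero (Finset.mem_univ i) ?_
    split_ifs <;> simp_all

lemma clockM_eq_diagonal : clockM = diagonal fun a : Fin 3 => ω ^ (a : ℕ) := by
  ext a b
  fin_cases a <;> fin_cases b <;> simp [clockM]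

section

open Fin.NatCast

lemma clockS_eq_diagonal {L j : ℕ} [NeZero L] (hj : j < L) :
    clockS L j = diagonal fun s => ω ^ (s (j : Fin L) : ℕ) := by
  have h := siteOp3_diagonal (j : Fin L) fun a => ω ^ (a : ℕ)
  rwa [Fin.val_cast_of_lt hj, ← clockM_eq_diagonal] at h

lemma clockS_conjTranspose_mul_self {L j : ℕ} [NeZero L] (hj : j < L) :
    (clockS L j)ᴴ * clockS L j = 1 := by
  rw [clockS_eq_diagonal hj, diagonal_conjTranspose, diagonal_mul_diagonal, ← diagonal_one]
  congr 1
  ext s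
  rw [Pi.star_apply, star_ω_pow, inv_mul_cancel₀ (pow_ne_zero _ ω_ne_zero)]

lemma chiralBondTerm_eq_diagonal {L j : ℕ} [NeZero L] (hj : j + 1 < L) :
    exp (-(Real.pi * I) / 6) • ((clockS L j)ᴴ * clockS L (j + 1))
        + exp ((Real.pi * I) / 6) • (clockS L j * (clockS L (j + 1))ᴴ)
      = diagonal fun s => chiralBond (ω ^ (s j : ℕ) / ω ^ (s (j + 1 : ℕ) : ℕ)) := by
  rw [clockS_eq_diagonal (Nat.lt_of_succ_lt hj), clockS_eq_diagonal hj]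
  simp only [diagonal_conjTranspose, diagonal_mul_diagonal, ← diagonal_smul, diagonal_add]
  congr 1
  ext s
  simp only [Pi.smul_apply, Pi.star_apply, star_ω_pow, smul_eq_mul, chiralBond, inv_div]
  ring

lemma sum_chiralBondTerm_eq_diagonal (L : ℕ) [NeZero L] :
    ∑ j ∈ Finset.range (L - 1),
        (exp (-(Real.pi * I) / 6) • ((clockS L j)ᴴ * clockS L (j + 1))
          + exp ((Real.pi * I) / 6) • (clockS L j * (clockS L (j + 1))ᴴ))
      = diagonal fun s => ∑ j ∈ Finset.range (L - 1),
          chiralBond (ω ^ (s j : ℕ) / ω ^ (s (j + 1 : ℕ) : ℕ)) := by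
  rw [Finset.sum_congr rfl fun j hj => chiralBondTerm_eq_diagonal (by
    have := Finset.mem_range.mp hj; have := NeZero.pos L; omega)]
  rw [← Finset.sum_fn]
  exact (map_sum (diagonalAddMonoidHom (Fin L → Fin 3) ℂ) _ _).symm

lemma exp_chiralClock (L : ℕ) [NeZero L] :
    NormedSpace.exp ((2 * (Real.pi : ℂ) * I / 3) • ((Real.sqrt 3 : ℂ)⁻¹ •
        ∑ j ∈ Finset.range (L - 1),
          (exp (-(Real.pi * I) / 6) • ((clockS L j)ᴴ * clockS L (j + 1))
            + exp ((Real.pi * I) / 6) • (clockS L j * (clockS L (j + 1))ᴴ))))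
      = ω ^ (L - 1) • (clockS L 0 * (clockS L (L - 1))ᴴ) := by
  rw [sum_chiralBondTerm_eq_diagonal, ← diagonal_smul, ← diagonal_smul, Matrix.exp_diagonal,
    clockS_eq_diagonal (NeZero.pos L), clockS_eq_diagonal (Nat.sub_lt (NeZero.pos L) one_pos),
    diagonal_conjTranspose, diagonal_mul_diagonal, ← diagonal_smul]
  congr 1
  ext s
  rw [Pi.coe_exp, ← Complex.exp_eq_exp_ℂ]
  simp only [Pi.smul_apply, Pi.star_apply, star_ω_pow, smul_eq_mul, ← div_eq_mul_inv]
  exact exp_sum_chiralBond (fun j => s j) (L - 1)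

end

lemma Commute.of_commute_mul_of_mul_eq_one {M : Type*} [Monoid M] {w a b b' : M}
    (hab : Commute w (a * b)) (hb' : Commute w b') (hbb' : b * b' = 1) : Commute w a := by
  simpa only [mul_assoc, hbb', mul_one] using hab.mul_right hb'

theorem statement_16 (L : ℕ) (hL : 2 ≤ L)
    (N : Matrix (Fin L → Fin 3) (Fin L → Fin 3) ℂ)
    (hN : N = ((Real.sqrt 3 : ℂ))⁻¹ • ∑ j ∈ Finset.range (L - 1),
      (Complex.exp (-(Real.pi * Complex.I) / 6) • ((clockS L j)ᴴ * clockS L (j + 1))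
        + Complex.exp ((Real.pi * Complex.I) / 6) • (clockS L j * (clockS L (j + 1))ᴴ))) :
    NormedSpace.exp ((2 * (Real.pi : ℂ) * Complex.I / 3) • N)
      = ω ^ (L - 1) • (clockS L 0 * (clockS L (L - 1))ᴴ) ∧
    (∀ W : Matrix (Fin L → Fin 3) (Fin L → Fin 3) ℂ,
      Commute W N → Commute W (clockS L (L - 1)) → Commute W (clockS L 0)) := by
  have : NeZero L := ⟨by omega⟩
  have hexp := exp_chiralClock L
  rw [← hN] at hexp
  refine ⟨hexp, fun W hWN hWσ => ?_⟩
  have hW : Commute W (ω ^ (L - 1) • (clockS L 0 * (clockS L (L - 1))ᴴ)) :=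
    hexp ▸ (hWN.smul_right _).exp_right
  rw [Commute.smul_right_iff₀ (pow_ne_zero _ ω_ne_zero)] at hW
  exact hW.of_commute_mul_of_mul_eq_one hWσ (clockS_conjTranspose_mul_self (by omega))

end
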